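/- arXiv:1708.00392 — 2 statements merged into one kernel-verified Lean document; each statement's English description precedes it below -/
import Mathlib

section
/- Let φ : ℝ → ℂ be measurable with ∫_ℝ (1+x²)|φ(x)|² dx < ∞. Then φ ∈ L¹(ℝ), (𝓕_q φ)(0) = 0, and moreover (𝓕_q φ)(ξ) → 0 as ξ → 0 (so 𝓕_q φ is continuous at ξ = 0 with value 0). -/
noncomputable section

open MeasureTheory Real Filter

def Tc (q ξ : ℝ) : ℂ := (Complex.I * ξ) / (Complex.I * ξ - q)

def Rc (q ξ : ℝ) : ℂ := (q : ℂ) / (Complex.I * ξ - q)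

def jost (q x ξ : ℝ) : ℂ :=
  if 0 < x then Complex.exp (Complex.I * x * ξ)
  else if x < 0 then
    (Tc q ξ)⁻¹ * Complex.exp (Complex.I * x * ξ)
      + Rc q ξ * (Tc q ξ)⁻¹ * Complex.exp (-(Complex.I * x * ξ))
  else 1

def Kker (q x ξ : ℝ) : ℂ :=
  if 0 < ξ then Tc q ξ * jost q x ξ
  else if ξ < 0 then Tc q (-ξ) * jost q (-x) (-ξ)
  else 0

def Fq (q : ℝ) (φ : ℝ → ℂ) (ξ : ℝ) : ℂ :=
  (Real.sqrt (2 * Real.pi))⁻¹ * ∫ x : ℝ, (starRingEnd ℂ) (Kker q x ξ) * φ x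

def FqInv (q : ℝ) (ψ : ℝ → ℂ) (x : ℝ) : ℂ :=
  (Real.sqrt (2 * Real.pi))⁻¹ * ∫ ξ : ℝ, Kker q x ξ * ψ ξ

def Vker (q t x ξ : ℝ) : ℂ :=
  Complex.exp (Complex.I * (Real.pi / 4)) * (Real.sqrt (t / (2 * Real.pi))) *
    Complex.exp (-(Complex.I * t * ((x ^ 2 + ξ ^ 2 : ℝ) : ℂ) / 2)) * Kker q (t * x) ξ

def Vop (q t : ℝ) (ψ : ℝ → ℂ) (x : ℝ) : ℂ := ∫ ξ : ℝ, Vker q t x ξ * ψ ξ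

def VopInv (q t : ℝ) (φ : ℝ → ℂ) (ξ : ℝ) : ℂ :=
  ∫ x : ℝ, (starRingEnd ℂ) (Vker q t x ξ) * φ x

def Fr (y : ℝ) : ℂ :=
  Complex.exp (Complex.I * (Real.pi / 4)) * (Real.sqrt (2 * Real.pi))⁻¹ *
    limUnder Filter.atTop
      (fun M : ℝ => ∫ x in (-M)..(-y), Complex.exp (-(Complex.I * (x ^ 2 : ℝ) / 2)))

def H1norm (g : ℝ → ℂ) : ℝ :=
  Real.sqrt ((∫ x : ℝ, ‖g x‖ ^ 2) + ∫ x : ℝ, ‖deriv g x‖ ^ 2)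

def L2norm (g : ℝ → ℂ) : ℝ := Real.sqrt (∫ x : ℝ, ‖g x‖ ^ 2)

def supNorm (g : ℝ → ℂ) : ℝ := ⨆ x : ℝ, ‖g x‖

/-!
For fixed `x`, the kernel `K(x, ξ)` is continuous in `ξ` on each closed half-line `±ξ ≥ 0`: after
cancelling `T(ξ)` against the factor `T(ξ)⁻¹` of the Jost function, each piece is built from `T`, `R`
and exponentials, and it vanishes at `ξ = 0` because `T(0) = 0` and `1 + R(0) = 0`. Since moreover
`|K| ≤ 2`, dominated convergence gives `𝓕_q φ(ξ) → 0`. Integrability of `φ` follows from the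
pointwise AM–GM bound `|φ| ≤ ((1 + x²)|φ|² + (1 + x²)⁻¹) / 2`.
-/

open Complex in
/-- The branch `ξ ≥ 0` of `Kker q x ξ`, with `T(ξ) · T(ξ)⁻¹` cancelled. -/
def kerPos (q x ξ : ℝ) : ℂ :=
  if 0 < x then Tc q ξ * exp (I * x * ξ)
  else if x < 0 then exp (I * x * ξ) + Rc q ξ * exp (-(I * x * ξ))
  else Tc q ξ

section Coefficients

variable {q : ℝ} (hq : 0 < q) (ξ : ℝ)
include hq

lemma I_mul_sub_ne_zero : Complex.I * ξ - q ≠ 0 := by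
  intro h
  have := congrArg Complex.re h
  simp at this
  linarith

lemma norm_I_mul_sub_pos : 0 < ‖Complex.I * ξ - q‖ :=
  norm_pos_iff.2 (I_mul_sub_ne_zero hq ξ)

lemma norm_Tc_le_one : ‖Tc q ξ‖ ≤ 1 := by
  rw [Tc, norm_div, div_le_one (norm_I_mul_sub_pos hq ξ)]
  simpa using Complex.abs_im_le_norm (Complex.I * ξ - q)

lemma norm_Rc_le_one : ‖Rc q ξ‖ ≤ 1 := by
  rw [Rc, norm_div, div_le_one (norm_I_mul_sub_pos hq ξ)]
  simpa [abs_of_pos hq] using Complex.abs_re_le_norm (Complex.I * ξ - q)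

lemma Tc_ne_zero (hξ : ξ ≠ 0) : Tc q ξ ≠ 0 :=
  div_ne_zero (by simp [hξ]) (I_mul_sub_ne_zero hq ξ)

omit ξ in
lemma continuous_Tc : Continuous (Tc q) :=
  Continuous.div (by fun_prop) (by fun_prop) (I_mul_sub_ne_zero hq)

omit ξ in
lemma continuous_Rc : Continuous (Rc q) :=
  Continuous.div (by fun_prop) (by fun_prop) (I_mul_sub_ne_zero hq)

end Coefficients

section KernelPos

variable {q : ℝ} (hq : 0 < q)
include hq

lemma continuous_kerPos (x : ℝ) : Continuous (kerPos q x) := by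
  have hT := continuous_Tc hq
  have hR := continuous_Rc hq
  unfold kerPos
  split_ifs <;> fun_prop

lemma kerPos_zero (x : ℝ) : kerPos q x 0 = 0 := by
  have hR : Rc q 0 = -1 := by simp [Rc, hq.ne']
  simp [kerPos, Tc, hR]

lemma norm_kerPos_le_two (x ξ : ℝ) : ‖kerPos q x ξ‖ ≤ 2 := by
  have hT := norm_Tc_le_one hq ξ
  have hR := norm_Rc_le_one hq ξ
  unfold kerPos
  split_ifs
  · simpa [Complex.norm_exp] using hT.trans one_le_two
  · calc _ ≤ ‖Complex.exp (Complex.I * x * ξ)‖ + ‖Rc q ξ * Complex.exp (-(Complex.I * x * ξ))‖ :=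
          norm_add_le _ _
      _ ≤ 1 + 1 := by simpa [Complex.norm_exp] using hR
      _ = 2 := one_add_one_eq_two
  · exact hT.trans one_le_two

lemma Kker_of_nonneg (x : ℝ) {ξ : ℝ} (hξ : 0 ≤ ξ) : Kker q x ξ = kerPos q x ξ := by
  rcases hξ.eq_or_lt with rfl | hξ
  · simp [Kker, kerPos_zero hq]
  have hT := Tc_ne_zero hq ξ hξ.ne'
  simp only [Kker, jost, kerPos, if_pos hξ]
  split_ifs <;> field_simp

lemma Kker_of_nonpos (x : ℝ) {ξ : ℝ} (hξ : ξ ≤ 0) : Kker q x ξ = kerPos q (-x) (-ξ) := by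
  rcases hξ.eq_or_lt with rfl | hξ
  · simp [Kker, kerPos_zero hq]
  rw [← Kker_of_nonneg hq (-x) (neg_nonneg.2 hξ.le)]
  simp [Kker, hξ, hξ.not_gt]

lemma norm_Kker_le_two (x ξ : ℝ) : ‖Kker q x ξ‖ ≤ 2 := by
  rcases le_total 0 ξ with hξ | hξ
  · rw [Kker_of_nonneg hq x hξ]; exact norm_kerPos_le_two hq x ξ
  · rw [Kker_of_nonpos hq x hξ]; exact norm_kerPos_le_two hq (-x) (-ξ)

lemma tendsto_Kker_nhds_zero (x : ℝ) : Tendsto (Kker q x) (nhds 0) (nhds 0) := by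
  have hcont : ContinuousAt (Kker q x) 0 := by
    refine continuousAt_iff_continuous_left_right.2 ⟨?_, ?_⟩
    · exact ((continuous_kerPos hq (-x)).comp continuous_neg).continuousWithinAt.congr
        (fun ξ hξ => Kker_of_nonpos hq x hξ) (Kker_of_nonpos hq x le_rfl)
    · exact (continuous_kerPos hq x).continuousWithinAt.congr
        (fun ξ hξ => Kker_of_nonneg hq x hξ) (Kker_of_nonneg hq x le_rfl)
  simpa [Kker] using hcont.tendsto

end KernelPos

lemma measurable_kerPos (q ξ : ℝ) : Measurable (fun x => kerPos q x ξ) := by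
  unfold kerPos
  refine Measurable.ite measurableSet_Ioi (by fun_prop) (Measurable.ite measurableSet_Iio ?_ ?_) <;>
    fun_prop

lemma measurable_Kker {q : ℝ} (hq : 0 < q) (ξ : ℝ) : Measurable (fun x => Kker q x ξ) := by
  rcases le_total 0 ξ with hξ | hξ
  · simpa only [Kker_of_nonneg hq _ hξ] using measurable_kerPos q ξ
  · simp only [Kker_of_nonpos hq _ hξ]
    exact (measurable_kerPos q (-ξ)).comp measurable_neg

lemma integrable_of_integrable_one_add_sq_mul_sq {E : Type*} [NormedAddCommGroup E] {φ : ℝ → E}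
    (hmeas : AEStronglyMeasurable φ) (hφ : Integrable (fun x : ℝ => (1 + x ^ 2) * ‖φ x‖ ^ 2)) :
    Integrable φ := by
  refine ((hφ.add integrable_inv_one_add_sq).div_const 2).mono' hmeas (ae_of_all _ fun x => ?_)
  change ‖φ x‖ ≤ ((1 + x ^ 2) * ‖φ x‖ ^ 2 + (1 + x ^ 2)⁻¹) / 2
  have hw : (1 + x ^ 2) * (1 + x ^ 2)⁻¹ = 1 := mul_inv_cancel₀ (by positivity)
  nlinarith [sq_nonneg ((1 + x ^ 2) * ‖φ x‖ - 1), norm_nonneg (φ x), sq_nonneg x]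

lemma tendsto_Fq_nhds_zero {q : ℝ} (hq : 0 < q) {φ : ℝ → ℂ} (hφ : Integrable φ) :
    Tendsto (Fq q φ) (nhds 0) (nhds 0) := by
  have hint : Tendsto (fun ξ => ∫ x, (starRingEnd ℂ) (Kker q x ξ) * φ x) (nhds 0)
      (nhds (∫ _ : ℝ, (0 : ℂ))) := by
    refine tendsto_integral_filter_of_dominated_convergence (fun x => 2 * ‖φ x‖)
      (Eventually.of_forall fun ξ => ?_) (Eventually.of_forall fun ξ => ae_of_all _ fun x => ?_)
      (hφ.norm.const_mul 2) (ae_of_all _ fun x => ?_)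
    · exact (Complex.continuous_conj.measurable.comp (measurable_Kker hq ξ)).aestronglyMeasurable.mul
        hφ.1
    · rw [norm_mul, RCLike.norm_conj]
      exact mul_le_mul_of_nonneg_right (norm_Kker_le_two hq x ξ) (norm_nonneg _)
    · simpa using ((continuous_star.tendsto 0).comp (tendsto_Kker_nhds_zero hq x)).mul_const (φ x)
  have hFq := hint.const_mul (((Real.sqrt (2 * Real.pi))⁻¹ : ℝ) : ℂ)
  rw [integral_zero, mul_zero] at hFq
  exact hFq

theorem stmt2 (q : ℝ) (hq : 0 < q) (φ : ℝ → ℂ) (hmeas : Measurable φ)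
    (hφ : Integrable (fun x : ℝ => (1 + x ^ 2) * ‖φ x‖ ^ 2)) :
    Integrable φ ∧ Fq q φ 0 = 0 ∧ Filter.Tendsto (Fq q φ) (nhds 0) (nhds 0) := by
  have hint : Integrable φ :=
    integrable_of_integrable_one_add_sq_mul_sq hmeas.aestronglyMeasurable hφ
  exact ⟨hint, by simp [Fq, Kker], tendsto_Fq_nhds_zero hq hint⟩
end
end

section
/- For every y ≥ 0, the limit Fr(y) = e^{iπ/4} (2π)^{-1/2} lim_{M→∞} ∫_{-M}^{-y} e^{-ix²/2} dx exists, and there is a constant C > 0 (independent of y) such that |Fr(y)| ≤ C (1 + y²)^{-1/2} for all y > 0. -/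
noncomputable section

open MeasureTheory Real Filter

/-! Reflecting `x ↦ -x`, the integral is `∫_y^M e^{-ix²/2} dx`.
As `(e^{-ix²/2})' = -ix e^{-ix²/2}`, integrating by parts against `1/x` gives
`‖∫_a^b e^{-ix²/2} dx‖ ≤ 2/a` for `0 < a ≤ b`; with the trivial bound near `0`, this becomes
`‖∫_a^b e^{-ix²/2} dx‖ ≤ 4/(1+a)` for `0 ≤ a ≤ b`. So `M ↦ ∫_y^M` is Cauchy, and its limit has
norm at most `4/(1+y) ≤ 4/√(1+y²)`. -/

namespace Fresnel

open intervalIntegral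

def chirp (x : ℝ) : ℂ := Complex.exp (-(Complex.I * (x ^ 2 : ℝ) / 2))

lemma norm_chirp (x : ℝ) : ‖chirp x‖ = 1 := by
  rw [chirp, Complex.norm_exp]
  norm_num [-Complex.ofReal_pow]

@[fun_prop]
lemma continuous_chirp : Continuous chirp := by
  unfold chirp
  fun_prop

lemma chirp_neg (x : ℝ) : chirp (-x) = chirp x := by
  simp [chirp]

lemma hasDerivAt_chirp (x : ℝ) : HasDerivAt chirp (-(Complex.I * x) * chirp x) x := by
  have hphase : HasDerivAt (fun t : ℝ => -(Complex.I * ((t ^ 2 : ℝ) : ℂ) / 2))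
      (-(Complex.I * x)) x := by
    have := (((hasDerivAt_pow 2 x).ofReal_comp).const_mul Complex.I).div_const 2 |>.neg
    exact this.congr_deriv (by push_cast; ring)
  exact hphase.cexp.congr_deriv (mul_comm _ _)

lemma hasDerivAt_I_div {x : ℝ} (hx : x ≠ 0) :
    HasDerivAt (fun t : ℝ => Complex.I / t) (-Complex.I / (x : ℂ) ^ 2) x := by
  have hx' : (x : ℂ) ≠ 0 := by exact_mod_cast hx
  have := ((hasDerivAt_id (x : ℂ)).inv hx').const_mul Complex.I
  exact (this.congr_deriv (by simp only [id]; ring)).comp_ofReal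

lemma integral_chirp_eq {a b : ℝ} (ha : 0 < a) (hab : a ≤ b) :
    ∫ x in a..b, chirp x = Complex.I / b * chirp b - Complex.I / a * chirp a
      - ∫ x in a..b, -Complex.I / (x : ℂ) ^ 2 * chirp x := by
  have hpos : ∀ x ∈ Set.uIcc a b, 0 < x := fun x hx =>
    ha.trans_le (Set.uIcc_of_le hab ▸ hx).1
  have hcont : ContinuousOn (fun x : ℝ => -Complex.I / (x : ℂ) ^ 2) (Set.uIcc a b) :=
    continuousOn_const.div (by fun_prop) fun x hx => by
      exact_mod_cast (pow_pos (hpos x hx) 2).ne'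
  rw [← intervalIntegral.integral_mul_deriv_eq_deriv_mul
    (fun x hx => hasDerivAt_I_div (hpos x hx).ne') (fun x _ => hasDerivAt_chirp x)
    hcont.intervalIntegrable
    ((by fun_prop : Continuous fun x : ℝ => -(Complex.I * x) * chirp x).intervalIntegrable a b)]
  refine integral_congr fun x hx => ?_
  have hx : (x : ℂ) ≠ 0 := by exact_mod_cast (hpos x hx).ne'
  field_simp
  rw [Complex.I_sq]
  ring

lemma integral_inv_sq {a b : ℝ} (ha : 0 < a) (hab : a ≤ b) :
    ∫ x in a..b, (x ^ 2)⁻¹ = a⁻¹ - b⁻¹ := by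
  have h := integral_zpow (a := a) (b := b) (n := -2)
    (Or.inr ⟨by norm_num, fun h0 => (ha.trans_le (Set.uIcc_of_le hab ▸ h0).1).false⟩)
  norm_num at h
  linear_combination h

lemma norm_integral_chirp_le_two_div {a b : ℝ} (ha : 0 < a) (hab : a ≤ b) :
    ‖∫ x in a..b, chirp x‖ ≤ 2 / a := by
  have hb := ha.trans_le hab
  have hboundary : ∀ c : ℝ, 0 < c → ‖Complex.I / c * chirp c‖ = c⁻¹ := fun c hc => by
    simp [norm_chirp, Complex.norm_real, abs_of_pos hc]
  have hrest : ‖∫ x in a..b, -Complex.I / (x : ℂ) ^ 2 * chirp x‖ ≤ a⁻¹ - b⁻¹ := by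
    calc _ ≤ ∫ x in a..b, ‖-Complex.I / (x : ℂ) ^ 2 * chirp x‖ :=
          norm_integral_le_integral_norm hab
      _ = ∫ x in a..b, (x ^ 2)⁻¹ := integral_congr fun x _ => by
          simp [norm_chirp, Complex.norm_real]
      _ = a⁻¹ - b⁻¹ := integral_inv_sq ha hab
  rw [integral_chirp_eq ha hab]
  calc _ ≤ ‖Complex.I / b * chirp b‖ + ‖Complex.I / a * chirp a‖
          + ‖∫ x in a..b, -Complex.I / (x : ℂ) ^ 2 * chirp x‖ :=
          (norm_sub_le _ _).trans (by gcongr; exact norm_sub_le _ _)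
    _ ≤ b⁻¹ + a⁻¹ + (a⁻¹ - b⁻¹) := by rw [hboundary b hb, hboundary a ha]; gcongr
    _ = 2 / a := by ring

-- For `a < 1` the trivial bound on `[a, 1]` gives `3 - a`,
-- and `3 - a ≤ 4 / (1 + a)` is `(1 - a) ^ 2 ≥ 0`.
lemma norm_integral_chirp_le {a b : ℝ} (ha : 0 ≤ a) (hab : a ≤ b) :
    ‖∫ x in a..b, chirp x‖ ≤ 4 / (1 + a) := by
  rcases le_or_gt 1 a with h1 | h1
  · calc _ ≤ 2 / a := norm_integral_chirp_le_two_div (by linarith) hab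
      _ ≤ 4 / (1 + a) := by rw [div_le_div_iff₀ (by linarith) (by linarith)]; linarith
  have hshort : ∀ c, a ≤ c → ‖∫ x in a..c, chirp x‖ ≤ c - a := fun c hc => by
    simpa [norm_chirp, abs_of_nonneg (sub_nonneg.2 hc)] using
      norm_integral_le_of_norm_le_const (a := a) (b := c) (C := 1) fun x _ => (norm_chirp x).le
  have hkey : 3 - a ≤ 4 / (1 + a) := by
    rw [le_div_iff₀ (by linarith)]
    nlinarith [sq_nonneg (a - 1)]
  refine le_trans ?_ hkey
  rcases le_or_gt b 1 with hb1 | hb1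
  · linarith [hshort b hab]
  rw [← integral_add_adjacent_intervals (continuous_chirp.intervalIntegrable a 1)
    (continuous_chirp.intervalIntegrable 1 b)]
  calc _ ≤ _ := norm_add_le _ _
    _ ≤ (1 - a) + 2 / 1 :=
      add_le_add (hshort 1 h1.le) (norm_integral_chirp_le_two_div one_pos hb1.le)
    _ = 3 - a := by ring

lemma exists_tendsto_integral_chirp (y : ℝ) :
    ∃ L, Tendsto (fun M : ℝ => ∫ x in y..M, chirp x) atTop (nhds L) := by
  refine cauchySeq_tendsto_of_complete (Metric.cauchySeq_iff'.2 fun ε hε => ?_)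
  set N := max y (8 / ε)
  have hN : 8 / ε ≤ N := le_max_right _ _
  have hN0 : 0 < N := (div_pos (by norm_num) hε).trans_le hN
  refine ⟨N, fun M hM => ?_⟩
  rw [dist_eq_norm, integral_interval_sub_left (continuous_chirp.intervalIntegrable y M)
    (continuous_chirp.intervalIntegrable y N)]
  calc _ ≤ 4 / (1 + N) := norm_integral_chirp_le hN0.le hM
    _ < ε := by
      rw [div_lt_iff₀ (by linarith)]
      rw [div_le_iff₀ hε] at hN
      linarith

lemma integral_neg_chirp (y M : ℝ) :
    ∫ x in (-M)..(-y), chirp x = ∫ x in y..M, chirp x := by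
  simpa only [chirp_neg] using (integral_comp_neg (a := y) (b := M) chirp).symm

lemma norm_le_of_tendsto_integral_chirp {y : ℝ} {L : ℂ} (hy : 0 ≤ y)
    (hL : Tendsto (fun M : ℝ => ∫ x in y..M, chirp x) atTop (nhds L)) :
    ‖L‖ ≤ 4 / (1 + y) :=
  le_of_tendsto hL.norm <| (eventually_ge_atTop y).mono fun _ hM => norm_integral_chirp_le hy hM

end Fresnel

open Fresnel

theorem stmt7 :
    (∀ y : ℝ, 0 ≤ y → ∃ L : ℂ, Filter.Tendsto
        (fun M : ℝ => ∫ x in (-M)..(-y), Complex.exp (-(Complex.I * (x ^ 2 : ℝ) / 2)))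
        Filter.atTop (nhds L)) ∧
      ∃ C > 0, ∀ y : ℝ, 0 < y → ‖Fr y‖ ≤ C * (Real.sqrt (1 + y ^ 2))⁻¹ := by
  have hlim : ∀ {y : ℝ} {L : ℂ},
      Tendsto (fun M : ℝ => ∫ x in y..M, chirp x) atTop (nhds L) →
      Tendsto (fun M : ℝ => ∫ x in (-M)..(-y), chirp x) atTop (nhds L) := fun hL =>
    hL.congr fun M => (integral_neg_chirp _ M).symm
  refine ⟨fun y _ => (exists_tendsto_integral_chirp y).imp fun _ => hlim, ?_⟩
  set c : ℂ := Complex.exp (Complex.I * (Real.pi / 4)) * (Real.sqrt (2 * Real.pi))⁻¹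
  have hc : c ≠ 0 :=
    mul_ne_zero (Complex.exp_ne_zero _) (by simp [Real.pi_pos.le, Real.pi_pos.ne'])
  refine ⟨‖c‖ * 4, by positivity, fun y hy => ?_⟩
  obtain ⟨L, hL⟩ := exists_tendsto_integral_chirp y
  have hFr : Fr y = c * L := congrArg (c * ·) (hlim hL).limUnder_eq
  have hsqrt : Real.sqrt (1 + y ^ 2) ≤ 1 + y := Real.sqrt_le_iff.2 ⟨by linarith, by nlinarith⟩
  calc ‖Fr y‖ = ‖c‖ * ‖L‖ := by rw [hFr, norm_mul]
    _ ≤ ‖c‖ * (4 / (1 + y)) := by gcongr; exact norm_le_of_tendsto_integral_chirp hy.le hL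
    _ ≤ ‖c‖ * 4 * (Real.sqrt (1 + y ^ 2))⁻¹ := by
      rw [mul_assoc, div_eq_mul_inv]
      gcongr
end
end
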